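/- In sl(4), the classical r-matrix r = ψ₁ E₁₃ ∧ (E₃₄ − ς₁ H₁^⊥) + ψ₂ς₁ H^P_{2,3} ∧ E₂₃ + ψ₁(H^P_{1,4} ∧ E₁₄ + E₁₂ ∧ E₂₄) satisfies the classical Yang–Baxter equation [r₁₂,r₁₃] + [r₁₂,r₂₃] + [r₁₃,r₂₃] = 0, for all scalar parameters ψ₁, ψ₂, ς₁. -/

import Mathlib

set_option maxHeartbeats 1000000

/- STATEMENT 10: In sl(4), r = ψ₁ E₁₃ ∧ (E₃₄ − ς₁ H₁^⊥) + ψ₂ς₁ H^P_{2,3} ∧ E₂₃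
+ ψ₁(H^P_{1,4} ∧ E₁₄ + E₁₂ ∧ E₂₄) satisfies the classical Yang–Baxter equation
in U(sl(4))^{⊗3}, for all scalars ψ₁, ψ₂, ς₁.  (0-based matrix indices.) -/

open TensorProduct Matrix

attribute [local instance 100] LieRing.ofAssociativeRing

noncomputable section

set_option linter.unusedSectionVars false

variable (K : Type) [Field K] [CharZero K] (L : Type) [LieRing L] [LieAlgebra K L]

/-- The triple tensor power of the universal enveloping algebra. -/
abbrev UEA3 := UniversalEnvelopingAlgebra K L ⊗[K]
    (UniversalEnvelopingAlgebra K L ⊗[K] UniversalEnvelopingAlgebra K L)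

variable {L}

/-- `a ↦ ι a ⊗ 1 ⊗ 1`. -/
def emb1 (a : L) : UEA3 K L :=
  (UniversalEnvelopingAlgebra.ι K a) ⊗ₜ[K] ((1 : UniversalEnvelopingAlgebra K L) ⊗ₜ[K] 1)

/-- `a ↦ 1 ⊗ ι a ⊗ 1`. -/
def emb2 (a : L) : UEA3 K L :=
  (1 : UniversalEnvelopingAlgebra K L) ⊗ₜ[K] ((UniversalEnvelopingAlgebra.ι K a) ⊗ₜ[K] 1)

/-- `a ↦ 1 ⊗ 1 ⊗ ι a`. -/
def emb3 (a : L) : UEA3 K L :=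
  (1 : UniversalEnvelopingAlgebra K L) ⊗ₜ[K]
    ((1 : UniversalEnvelopingAlgebra K L) ⊗ₜ[K] (UniversalEnvelopingAlgebra.ι K a))

/-- `(a ∧ b)₁₂ = a ⊗ b ⊗ 1 − b ⊗ a ⊗ 1`. -/
def w12 (a b : L) : UEA3 K L := emb1 K a * emb2 K b - emb1 K b * emb2 K a

/-- `(a ∧ b)₁₃ = a ⊗ 1 ⊗ b − b ⊗ 1 ⊗ a`. -/
def w13 (a b : L) : UEA3 K L := emb1 K a * emb3 K b - emb1 K b * emb3 K a

/-- `(a ∧ b)₂₃ = 1 ⊗ a ⊗ b − 1 ⊗ b ⊗ a`. -/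
def w23 (a b : L) : UEA3 K L := emb2 K a * emb3 K b - emb2 K b * emb3 K a

def E4 (i j : Fin 4) : Matrix (Fin 4) (Fin 4) K := single i j 1

def HP14 : Matrix (Fin 4) (Fin 4) K :=
  (4 : K)⁻¹ • ((3 : K) • E4 K 0 0 - E4 K 1 1 - E4 K 2 2 - E4 K 3 3)

def HP23 : Matrix (Fin 4) (Fin 4) K :=
  (4 : K)⁻¹ • (-(E4 K 0 0) + (3 : K) • E4 K 1 1 - E4 K 2 2 - E4 K 3 3)

def Hperp1 : Matrix (Fin 4) (Fin 4) K :=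
  (2 : K)⁻¹ • (E4 K 0 0 - E4 K 1 1 - E4 K 2 2 + E4 K 3 3)

/-- `r₁₂, r₁₃, r₂₃` for the given r-matrix, as a function of the wedge embedding. -/
def rsl4 (ψ₁ ψ₂ ς₁ : K)
    (w : Matrix (Fin 4) (Fin 4) K → Matrix (Fin 4) (Fin 4) K → UEA3 K (Matrix (Fin 4) (Fin 4) K)) :
    UEA3 K (Matrix (Fin 4) (Fin 4) K) :=
  ψ₁ • w (E4 K 0 2) (E4 K 2 3 - ς₁ • Hperp1 K) + (ψ₂ * ς₁) • w (HP23 K) (E4 K 1 2) +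
    ψ₁ • (w (HP14 K) (E4 K 0 3) + w (E4 K 0 1) (E4 K 1 3))

/-- The pure tensor `ι x ⊗ ι y ⊗ ι z`. -/
def tt (x y z : L) : UEA3 K L :=
  (UniversalEnvelopingAlgebra.ι K x) ⊗ₜ[K]
    ((UniversalEnvelopingAlgebra.ι K y) ⊗ₜ[K] (UniversalEnvelopingAlgebra.ι K z))

lemma iota_lie (a b : L) : UniversalEnvelopingAlgebra.ι K ⁅a, b⁆ =
    UniversalEnvelopingAlgebra.ι K a * UniversalEnvelopingAlgebra.ι K b -
    UniversalEnvelopingAlgebra.ι K b * UniversalEnvelopingAlgebra.ι K a := by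
  rw [LieHom.map_lie, Ring.lie_def]

lemma key12_13 (a b c d : L) : ⁅w12 K a b, w13 K c d⁆ =
    tt K ⁅a,c⁆ b d - tt K ⁅a,d⁆ b c - tt K ⁅b,c⁆ a d + tt K ⁅b,d⁆ a c := by
  simp only [w12, w13, tt, emb1, emb2, emb3, Ring.lie_def, iota_lie,
    Algebra.TensorProduct.tmul_mul_tmul, one_mul, mul_one, sub_mul, mul_sub,
    sub_tmul, tmul_sub]
  abel

lemma key12_23 (a b c d : L) : ⁅w12 K a b, w23 K c d⁆ =
    tt K a ⁅b,c⁆ d - tt K a ⁅b,d⁆ c - tt K b ⁅a,c⁆ d + tt K b ⁅a,d⁆ c := by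
  simp only [w12, w23, tt, emb1, emb2, emb3, Ring.lie_def, iota_lie,
    Algebra.TensorProduct.tmul_mul_tmul, one_mul, mul_one, sub_mul, mul_sub,
    sub_tmul, tmul_sub]
  abel

lemma key13_23 (a b c d : L) : ⁅w13 K a b, w23 K c d⁆ =
    tt K a c ⁅b,d⁆ - tt K a d ⁅b,c⁆ - tt K b c ⁅a,d⁆ + tt K b d ⁅a,c⁆ := by
  simp only [w13, w23, tt, emb1, emb2, emb3, Ring.lie_def, iota_lie,
    Algebra.TensorProduct.tmul_mul_tmul, one_mul, mul_one, sub_mul, mul_sub,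
    sub_tmul, tmul_sub]
  abel

lemma tt_add1 (x x' y z : L) : tt K (x + x') y z = tt K x y z + tt K x' y z := by
  simp [tt, add_tmul]
lemma tt_add2 (x y y' z : L) : tt K x (y + y') z = tt K x y z + tt K x y' z := by
  simp [tt, add_tmul, tmul_add]
lemma tt_add3 (x y z z' : L) : tt K x y (z + z') = tt K x y z + tt K x y z' := by
  simp [tt, tmul_add]
lemma tt_smul1 (c : K) (x y z : L) : tt K (c • x) y z = c • tt K x y z := by
  simp [tt, smul_tmul']
lemma tt_smul2 (c : K) (x y z : L) : tt K x (c • y) z = c • tt K x y z := by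
  rw [tt, tt, map_smul, ← smul_tmul', tmul_smul]
lemma tt_smul3 (c : K) (x y z : L) : tt K x y (c • z) = c • tt K x y z := by
  simp [tt, tmul_smul]
lemma tt_neg1 (x y z : L) : tt K (-x) y z = -tt K x y z := by
  simp [tt, neg_tmul]
lemma tt_neg2 (x y z : L) : tt K x (-y) z = -tt K x y z := by
  simp [tt, neg_tmul, tmul_neg]
lemma tt_neg3 (x y z : L) : tt K x y (-z) = -tt K x y z := by
  simp [tt, tmul_neg]
lemma tt_sub1 (x x' y z : L) : tt K (x - x') y z = tt K x y z - tt K x' y z := by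
  simp [tt, sub_tmul]
lemma tt_sub2 (x y y' z : L) : tt K x (y - y') z = tt K x y z - tt K x y' z := by
  simp [tt, sub_tmul, tmul_sub]
lemma tt_sub3 (x y z z' : L) : tt K x y (z - z') = tt K x y z - tt K x y z' := by
  simp [tt, tmul_sub]
lemma tt_zero1 (y z : L) : tt K 0 y z = 0 := by simp [tt, zero_tmul]
lemma tt_zero2 (x z : L) : tt K x 0 z = 0 := by simp [tt, zero_tmul, tmul_zero]
lemma tt_zero3 (x y : L) : tt K x y 0 = 0 := by simp [tt, tmul_zero]

lemma E4_mul (i j k l : Fin 4) :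
    E4 K i j * E4 K k l = if j = k then E4 K i l else 0 := by
  by_cases h : j = k
  · subst h; simp [E4, Matrix.single_mul_single_same]
  · rw [E4, E4, Matrix.single_mul_single_of_ne (h := h), if_neg h]


section Mono

/-- Abbreviation for the matrix Lie algebra. -/
abbrev M4 := Matrix (Fin 4) (Fin 4) K

-- Monomorphic bilinearity lemmas for the bracket on `UEA3 K (M4 K)`,
-- stated so that they match the syntactic instances appearing in the goal.
lemma U_add_lie (x y z : UEA3 K (M4 K)) : ⁅x + y, z⁆ = ⁅x, z⁆ + ⁅y, z⁆ := add_lie x y z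
lemma U_lie_add (x y z : UEA3 K (M4 K)) : ⁅x, y + z⁆ = ⁅x, y⁆ + ⁅x, z⁆ := lie_add x y z
lemma U_lie_def (x y : UEA3 K (M4 K)) : ⁅x, y⁆ = x * y - y * x := rfl
lemma U_smul_lie (c : K) (x y : UEA3 K (M4 K)) : ⁅c • x, y⁆ = c • ⁅x, y⁆ := by
  rw [U_lie_def, U_lie_def, smul_mul_assoc, mul_smul_comm]; module
lemma U_lie_smul (c : K) (x y : UEA3 K (M4 K)) : ⁅x, c • y⁆ = c • ⁅x, y⁆ := by
  rw [U_lie_def, U_lie_def, smul_mul_assoc, mul_smul_comm]; module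

-- Monomorphic key commutator lemmas.
lemma key12_13M (a b c d : M4 K) : ⁅w12 K a b, w13 K c d⁆ =
    tt K ⁅a,c⁆ b d - tt K ⁅a,d⁆ b c - tt K ⁅b,c⁆ a d + tt K ⁅b,d⁆ a c := key12_13 K a b c d
lemma key12_23M (a b c d : M4 K) : ⁅w12 K a b, w23 K c d⁆ =
    tt K a ⁅b,c⁆ d - tt K a ⁅b,d⁆ c - tt K b ⁅a,c⁆ d + tt K b ⁅a,d⁆ c := key12_23 K a b c d
lemma key13_23M (a b c d : M4 K) : ⁅w13 K a b, w23 K c d⁆ =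
    tt K a c ⁅b,d⁆ - tt K a d ⁅b,c⁆ - tt K b c ⁅a,d⁆ + tt K b d ⁅a,c⁆ := key13_23 K a b c d

-- Monomorphic bilinearity for the matrix bracket.
lemma M_add_lie (x y z : M4 K) : ⁅x + y, z⁆ = ⁅x, z⁆ + ⁅y, z⁆ := add_lie x y z
lemma M_lie_add (x y z : M4 K) : ⁅x, y + z⁆ = ⁅x, y⁆ + ⁅x, z⁆ := lie_add x y z
lemma M_smul_lie (c : K) (x y : M4 K) : ⁅c • x, y⁆ = c • ⁅x, y⁆ := smul_lie c x y
lemma M_lie_smul (c : K) (x y : M4 K) : ⁅x, c • y⁆ = c • ⁅x, y⁆ := lie_smul c x y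
lemma M_sub_lie (x y z : M4 K) : ⁅x - y, z⁆ = ⁅x, z⁆ - ⁅y, z⁆ := sub_lie x y z
lemma M_lie_sub (x y z : M4 K) : ⁅x, y - z⁆ = ⁅x, y⁆ - ⁅x, z⁆ := lie_sub x y z
lemma M_neg_lie (x y : M4 K) : ⁅-x, y⁆ = -⁅x, y⁆ := neg_lie x y
lemma M_lie_neg (x y : M4 K) : ⁅x, -y⁆ = -⁅x, y⁆ := lie_neg x y

lemma M_lie_def (x y : M4 K) : ⁅x, y⁆ = x * y - y * x := Ring.lie_def x y

lemma lieE4 (i j k l : Fin 4) : ⁅E4 K i j, E4 K k l⁆ =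
    (if j = k then E4 K i l else 0) - (if l = i then E4 K k j else 0) := by
  rw [M_lie_def, E4_mul, E4_mul]

end Mono

theorem stmt10 (ψ₁ ψ₂ ς₁ : K) :
    ⁅rsl4 K ψ₁ ψ₂ ς₁ (w12 K), rsl4 K ψ₁ ψ₂ ς₁ (w13 K)⁆ +
      ⁅rsl4 K ψ₁ ψ₂ ς₁ (w12 K), rsl4 K ψ₁ ψ₂ ς₁ (w23 K)⁆ +
      ⁅rsl4 K ψ₁ ψ₂ ς₁ (w13 K), rsl4 K ψ₁ ψ₂ ς₁ (w23 K)⁆ = 0 := by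
  simp only [rsl4, U_add_lie, U_lie_add, U_smul_lie, U_lie_smul,
    key12_13M, key12_23M, key13_23M]
  simp only [HP14, HP23, Hperp1, M_lie_add, M_add_lie, M_lie_sub, M_sub_lie,
    M_lie_smul, M_smul_lie, M_lie_neg, M_neg_lie, lieE4, Fin.reduceEq, reduceIte,
    if_true, if_false, sub_zero, zero_sub, sub_self, neg_zero, smul_zero, zero_smul,
    tt_add1, tt_add2, tt_add3, tt_sub1, tt_sub2, tt_sub3,
    tt_smul1, tt_smul2, tt_smul3, tt_neg1, tt_neg2, tt_neg3,
    tt_zero1, tt_zero2, tt_zero3, smul_neg, smul_add, smul_sub,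
    add_zero, zero_add, neg_neg, smul_smul]
  module

end
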